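/- Assume in addition that f is surjective. Let g, g₀, ℓ : Z → ℝ be continuous functions with g ∘ f = d·g − ℓ, and for each integer n ≥ 1 define g_n := d^{−n}·( g₀ ∘ f^n + Σ_{i=0}^{n−1} d^i·(ℓ ∘ f^{n−1−i}) ). Then sup_{z ∈ Z} |g(z) − g_n(z)| = d^{−n} · sup_{z ∈ Z} |g(z) − g₀(z)| for every n ≥ 1; in particular, the sequence (g_n) converges uniformly on Z to g. -/

import Mathlib

/-!
Iterating `g ∘ f = d • g - ℓ` gives `g ∘ f^[n] = d ^ n • g - ∑ i < n, d ^ i • ℓ ∘ f^[n - 1 - i]`,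
so `g - g_n = d⁻ⁿ • (g - g₀) ∘ f^[n]` exactly. Since `f^[n]` is surjective, precomposing with it
does not change the supremum of `|g - g₀|`, which is finite by compactness; uniform convergence
follows from the factor `d⁻ⁿ → 0`.
-/

open Filter Finset

theorem Function.Surjective.iSup_comp_of_supSet {ι ι' α : Type*} [SupSet α] {f : ι → ι'}
    (hf : f.Surjective) (g : ι' → α) : ⨆ x, g (f x) = ⨆ y, g y :=
  congrArg sSup (hf.range_comp g)

theorem tendstoUniformly_of_dist_le {ι β α : Type*} [PseudoMetricSpace α] {p : Filter ι}
    {F : ι → β → α} {f : β → α} {u : ι → ℝ} (hu : Tendsto u p (nhds 0))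
    (h : ∀ n x, dist (f x) (F n x) ≤ u n) : TendstoUniformly F f p :=
  Metric.tendstoUniformly_iff.2 fun ε hε => by
    filter_upwards [hu.eventually (gt_mem_nhds hε)] with n hn x using (h n x).trans_lt hn

theorem Function.apply_iterate_eq_pow_mul_sub_sum {Z R : Type*} [CommRing R] {f : Z → Z} {d : R}
    {g ℓ : Z → R} (heq : ∀ z, g (f z) = d * g z - ℓ z) (n : ℕ) (z : Z) :
    g (f^[n] z) = d ^ n * g z - ∑ i ∈ range n, d ^ i * ℓ (f^[n - 1 - i] z) := by
  induction n with
  | zero => simp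
  | succ n ih =>
    rw [Function.iterate_succ_apply', heq, ih, sum_range_succ', mul_sub, mul_sum]
    simp only [Nat.add_sub_cancel, Nat.sub_sub, add_comm 1, Nat.sub_zero, pow_zero, one_mul,
      pow_succ', mul_assoc]
    ring

theorem Function.sub_inv_pow_mul_eq_inv_pow_mul_sub_apply_iterate {Z K : Type*} [Field K]
    {f : Z → Z} {d : K} (hd : d ≠ 0) {g g₀ ℓ : Z → K} (heq : ∀ z, g (f z) = d * g z - ℓ z)
    (n : ℕ) (z : Z) :
    g z - (d ^ n)⁻¹ * (g₀ (f^[n] z) + ∑ i ∈ range n, d ^ i * ℓ (f^[n - 1 - i] z)) =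
      (d ^ n)⁻¹ * (g (f^[n] z) - g₀ (f^[n] z)) := by
  rw [Function.apply_iterate_eq_pow_mul_sub_sum heq]
  field_simp
  ring

theorem stmt4_general {Z : Type*} [TopologicalSpace Z] [CompactSpace Z]
    (f : Z → Z) (hsurj : Function.Surjective f)
    (d : ℝ) (hd : 1 < d)
    (g g₀ ℓ : Z → ℝ) (hg : Continuous g) (hg₀ : Continuous g₀)
    (heq : ∀ z : Z, g (f z) = d * g z - ℓ z)
    (gn : ℕ → Z → ℝ)
    (hgn : ∀ (n : ℕ) (z : Z), gn n z = (d ^ n)⁻¹ *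
      (g₀ (f^[n] z) + ∑ i ∈ Finset.range n, d ^ i * ℓ (f^[n - 1 - i] z))) :
    (∀ n : ℕ, 1 ≤ n →
        (⨆ z : Z, |g z - gn n z|) = (d ^ n)⁻¹ * ⨆ z : Z, |g z - g₀ z|) ∧
      TendstoUniformly (fun n z => gn n z) g atTop := by
  set C := ⨆ z, |g z - g₀ z|
  have habs (n : ℕ) (z : Z) :
      |g z - gn n z| = (d ^ n)⁻¹ * |g (f^[n] z) - g₀ (f^[n] z)| := by
    rw [hgn, Function.sub_inv_pow_mul_eq_inv_pow_mul_sub_apply_iterate (by positivity) heq,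
      abs_mul, abs_of_pos (by positivity)]
  have hsup (n : ℕ) : (⨆ z, |g z - gn n z|) = (d ^ n)⁻¹ * C := by
    simp only [habs, ← Real.mul_iSup_of_nonneg (by positivity : 0 ≤ (d ^ n)⁻¹)]
    rw [(hsurj.iterate n).iSup_comp_of_supSet fun z => |g z - g₀ z|]
  have hC (z : Z) : |g z - g₀ z| ≤ C :=
    le_ciSup (isCompact_range (hg.sub hg₀).abs).bddAbove z
  have hdecay : Tendsto (fun n : ℕ => (d ^ n)⁻¹ * C) atTop (nhds 0) := by
    simpa using (tendsto_inv_atTop_zero.comp (tendsto_pow_atTop_atTop_of_one_lt hd)).mul_const C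
  refine ⟨fun n _ => hsup n, tendstoUniformly_of_dist_le hdecay fun n z => ?_⟩
  rw [Real.dist_eq, habs]
  gcongr
  exact hC _

/-- `Z` compact, `f : Z → Z` continuous and surjective, `d > 1`,
`g, g₀, ℓ : Z → ℝ` continuous with `g ∘ f = d·g − ℓ`.  With
`g_n := d^{−n}·(g₀ ∘ f^n + ∑_{i=0}^{n−1} d^i·(ℓ ∘ f^{n−1−i}))`, one has
`sup_z |g z − g_n z| = d^{−n} · sup_z |g z − g₀ z|` for every `n ≥ 1`, and in
particular `g_n → g` uniformly on `Z`. -/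
theorem stmt4 {Z : Type*} [TopologicalSpace Z] [CompactSpace Z]
    (f : Z → Z) (hf : Continuous f) (hsurj : Function.Surjective f)
    (d : ℝ) (hd : 1 < d)
    (g g₀ ℓ : Z → ℝ) (hg : Continuous g) (hg₀ : Continuous g₀) (hℓ : Continuous ℓ)
    (heq : ∀ z : Z, g (f z) = d * g z - ℓ z)
    (gn : ℕ → Z → ℝ)
    (hgn : ∀ (n : ℕ) (z : Z), gn n z = (d ^ n)⁻¹ *
      (g₀ (f^[n] z) + ∑ i ∈ Finset.range n, d ^ i * ℓ (f^[n - 1 - i] z))) :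
    (∀ n : ℕ, 1 ≤ n →
        (⨆ z : Z, |g z - gn n z|) = (d ^ n)⁻¹ * ⨆ z : Z, |g z - g₀ z|) ∧
      TendstoUniformly (fun n z => gn n z) g atTop :=
  stmt4_general f hsurj d hd g g₀ ℓ hg hg₀ heq gn hgn
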